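/- Let h be a positive integer and let G be an entropy-minimal finite simple graph with H(G) strictly between h−1 and h. If M is the set of vertices covered by a maximum matching of G, then the number of vertices of G outside M is strictly smaller than |M|; in particular G has fewer than 2|M| vertices. -/

import Mathlib

noncomputable section

/-- `g : [q]^V → [q]` depends essentially on coordinate `u`: there exist two inputs that
differ only at coordinate `u` on which `g` takes different values. -/
def EssDependsOn {V : Type*} {q : ℕ} (g : (V → Fin q) → Fin q) (u : V) : Prop :=
  ∃ a b : V → Fin q, (∀ w, w ≠ u → a w = b w) ∧ g a ≠ g b

/-- The interaction graph of `f` is contained in the simple graph `G`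
(viewed as the symmetric loopless digraph with arcs `(u,v)` and `(v,u)` for every edge `uv`). -/
def IGLe {V : Type*} {q : ℕ} (G : SimpleGraph V) (f : (V → Fin q) → (V → Fin q)) : Prop :=
  ∀ u v : V, EssDependsOn (fun x => f x v) u → G.Adj u v

/-- The `q`-ary guessing number of a simple graph `G`: the maximum of `log_q |Fix(f)|`
over all `f` whose interaction graph is contained in `G`. -/
def guessing {V : Type*} (G : SimpleGraph V) (q : ℕ) : ℝ :=
  sSup {x : ℝ | ∃ f : (V → Fin q) → (V → Fin q),
    IGLe G f ∧ x = Real.logb q (Set.ncard {p : V → Fin q | f p = p})}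

/-- The entropy of a simple graph: the supremum over `q ≥ 2` of its `q`-guessing numbers. -/
def graphEntropy {V : Type*} (G : SimpleGraph V) : ℝ :=
  sSup {x : ℝ | ∃ q : ℕ, 2 ≤ q ∧ x = guessing G q}

/-- The set of all entropies of finite simple graphs. -/
def entropySet : Set ℝ := {x : ℝ | ∃ (n : ℕ) (G : SimpleGraph (Fin n)), graphEntropy G = x}

/-- A finite simple graph is entropy-minimal if no simple graph with fewer vertices has the same
fractional part of the entropy. -/
def EntropyMinimal {n : ℕ} (G : SimpleGraph (Fin n)) : Prop :=
  ∀ m : ℕ, m < n → ∀ G' : SimpleGraph (Fin m),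
    Int.fract (graphEntropy G') ≠ Int.fract (graphEntropy G)

/-!
Suppose `W ∩ D = ∅`, every neighbour of `D` lies in `W`, and `W` is matched into `D`. Then for
every `q` the guessing number of `G` is `|W|` plus that of `G - (W ∪ D)`: at a fixed point the
values on `D` are functions of those on `W` (upper bound), and letting matched pairs copy each
other on top of any map for `G - (W ∪ D)` gives the lower bound. So `H(G) - |W|` is the entropy of
a smaller graph, and an entropy-minimal graph admits no such `D ≠ ∅`.

The vertices `U` missed by a maximum matching `M` are independent with all neighbours in `M`.
If `|U| ≥ |M|`, Hall's theorem either matches `M` into `U`, which is excluded, or yields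
`S ⊆ M` with fewer than `|S|` neighbours in `U`; removing `S` and these neighbours keeps
`|M \ S| < |U \ N(S)|`, and we conclude by induction.
-/

open Function

section EssentialDependence

variable {V W : Type*} {q : ℕ}

theorem EssDependsOn.of_comp {g : (W → Fin q) → Fin q} {φ : (V → Fin q) → W → Fin q} {u : V}
    {w : W} (hφ : ∀ a b : V → Fin q, (∀ x, x ≠ u → a x = b x) → ∀ y, y ≠ w → φ a y = φ b y)
    (h : EssDependsOn (fun x => g (φ x)) u) : EssDependsOn g w := by
  obtain ⟨a, b, hab, hne⟩ := h
  exact ⟨φ a, φ b, hφ a b hab, hne⟩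

theorem EssDependsOn.of_domRestrict {s : Set V} {g : (s → Fin q) → Fin q} {u : V}
    (h : EssDependsOn (fun x => g (s.domRestrict x)) u) : ∃ hu : u ∈ s, EssDependsOn g ⟨u, hu⟩ := by
  by_cases hu : u ∈ s
  · refine ⟨hu, h.of_comp fun a b hab y hy => hab y.1 fun hyu => hy (Subtype.ext hyu)⟩
  · obtain ⟨a, b, hab, hne⟩ := h
    exact absurd (congrArg g (funext fun y => hab y (ne_of_mem_of_not_mem y.2 hu))) hne

theorem EssDependsOn.eq_of_eval {u w : V} (h : EssDependsOn (fun x : V → Fin q => x w) u) :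
    u = w := by
  obtain ⟨a, b, hab, hne⟩ := h
  by_contra huw
  exact hne (hab w (Ne.symm huw))

theorem not_essDependsOn_const (c : Fin q) (u : V) : ¬EssDependsOn (fun _ : V → Fin q => c) u :=
  fun ⟨_, _, _, hne⟩ => hne rfl

theorem dependsOn_setOf_essDependsOn [Fintype V] (g : (V → Fin q) → Fin q) :
    DependsOn g {u | EssDependsOn g u} := by
  classical
  suffices key : ∀ (s : Finset V) (a b : V → Fin q), (∀ u ∉ s, a u = b u) →
      (∀ u ∈ s, ¬EssDependsOn g u) → g a = g b by
    intro a b hab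
    refine key (Finset.univ.filter fun u => ¬EssDependsOn g u) a b (fun u hu => ?_) (by simp)
    exact hab u (by simpa using hu)
  intro s
  induction s using Finset.induction_on with
  | empty => exact fun a b hab _ => congrArg g (funext fun u => hab u (Finset.notMem_empty u))
  | insert u s _ ih =>
    intro a b hab hess
    have hstep : g a = g (update a u (b u)) := by
      by_contra hne
      refine hess u (Finset.mem_insert_self u s) ⟨a, _, fun w hw => ?_, hne⟩
      rw [update_of_ne hw]
    refine hstep.trans (ih _ b (fun w hw => ?_) fun w hw => hess w (Finset.mem_insert_of_mem hw))
    rcases eq_or_ne w u with rfl | hwu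
    · rw [update_self]
    · rw [update_of_ne hwu]
      exact hab w (by simp [hwu, hw])

theorem IGLe.dependsOn_neighborSet [Fintype V] {G : SimpleGraph V}
    {f : (V → Fin q) → V → Fin q} (hf : IGLe G f) (v : V) :
    DependsOn (fun x => f x v) (G.neighborSet v) :=
  (dependsOn_setOf_essDependsOn _).mono fun u hu => (hf u v hu).symm

theorem igle_const (G : SimpleGraph V) (c : V → Fin q) : IGLe G fun _ => c :=
  fun u v h => absurd h (not_essDependsOn_const (c v) u)

end EssentialDependence

section GuessingNumber

variable {V V' : Type*} {q : ℕ}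

theorem logb_ncard_le_card [Fintype V] (s : Set (V → Fin q)) (hq : 1 < q) :
    Real.logb q s.ncard ≤ Fintype.card V := by
  rcases s.eq_empty_or_nonempty with rfl | hs
  · simp
  have hcard : (s.ncard : ℝ) ≤ (q : ℝ) ^ Fintype.card V := by
    have := Set.ncard_le_ncard (Set.subset_univ s)
    simp only [Set.ncard_univ, Nat.card_fun, Nat.card_eq_fintype_card, Fintype.card_fin] at this
    exact_mod_cast this
  rw [Real.logb_le_iff_le_rpow (by exact_mod_cast hq) (by exact_mod_cast hs.ncard_pos),
    Real.rpow_natCast]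
  exact hcard

variable (G : SimpleGraph V)

theorem graphEntropy_le {c : ℝ} (h : ∀ q, 2 ≤ q → guessing G q ≤ c) : graphEntropy G ≤ c :=
  csSup_le ⟨_, 2, le_rfl, rfl⟩ fun _ ⟨q, hq, hx⟩ => hx ▸ h q hq

theorem guessing_le (hq : 0 < q) {c : ℝ}
    (h : ∀ f : (V → Fin q) → V → Fin q, IGLe G f → (fixedPoints f).Nonempty →
      Real.logb q (fixedPoints f).ncard ≤ c) :
    guessing G q ≤ c := by
  set p : V → Fin q := fun _ => ⟨0, hq⟩
  have hconst : fixedPoints (fun _ => p) = {p} := by ext; simp [IsFixedPt, eq_comm]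
  refine csSup_le ⟨_, _, igle_const G p, rfl⟩ ?_
  rintro _ ⟨f, hf, rfl⟩
  change Real.logb q (fixedPoints f).ncard ≤ c
  rcases (fixedPoints f).eq_empty_or_nonempty with hf0 | hne
  · simpa [hf0, hconst] using h _ (igle_const G p) (by simp [hconst])
  · exact h f hf hne

variable [Fintype V]

theorem le_guessing (hq : 1 < q) {f : (V → Fin q) → V → Fin q} (hf : IGLe G f) :
    Real.logb q (fixedPoints f).ncard ≤ guessing G q :=
  le_csSup ⟨Fintype.card V, by rintro _ ⟨f, -, rfl⟩; exact logb_ncard_le_card _ hq⟩ ⟨f, hf, rfl⟩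

theorem guessing_le_card (hq : 1 < q) : guessing G q ≤ Fintype.card V :=
  guessing_le G (by omega) fun _ _ _ => logb_ncard_le_card _ hq

theorem ncard_fixedPoints_le_rpow_guessing (hq : 1 < q) {f : (V → Fin q) → V → Fin q}
    (hf : IGLe G f) : ((fixedPoints f).ncard : ℝ) ≤ (q : ℝ) ^ guessing G q := by
  rcases (fixedPoints f).eq_empty_or_nonempty with hf0 | hne
  · simp only [hf0, Set.ncard_empty, Nat.cast_zero]
    positivity
  · rw [← Real.logb_le_iff_le_rpow (by exact_mod_cast hq) (by exact_mod_cast hne.ncard_pos)]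
    exact le_guessing G hq hf

theorem guessing_le_graphEntropy (hq : 2 ≤ q) : guessing G q ≤ graphEntropy G :=
  le_csSup ⟨Fintype.card V, by rintro _ ⟨q, hq, rfl⟩; exact guessing_le_card G hq⟩ ⟨q, hq, rfl⟩

theorem graphEntropy_le_card : graphEntropy G ≤ Fintype.card V :=
  graphEntropy_le G fun _ hq => guessing_le_card G hq

theorem graphEntropy_eq_add_of_forall_guessing_eq_add [Fintype V'] {G' : SimpleGraph V'} {k : ℝ}
    (h : ∀ q, 2 ≤ q → guessing G q = k + guessing G' q) :
    graphEntropy G = k + graphEntropy G' := by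
  refine le_antisymm (graphEntropy_le G fun q hq => ?_) ?_
  · linarith [h q hq, guessing_le_graphEntropy G' hq]
  · suffices graphEntropy G' ≤ graphEntropy G - k by linarith
    exact graphEntropy_le G' fun q hq => by linarith [h q hq, guessing_le_graphEntropy G hq]

end GuessingNumber

section Isomorphism

variable {V V' : Type*} {G : SimpleGraph V} {G' : SimpleGraph V'}

theorem exists_igle_ncard_fixedPoints_eq (e : G ≃g G') {q : ℕ} {f : (V → Fin q) → V → Fin q}
    (hf : IGLe G f) :
    ∃ f' : (V' → Fin q) → V' → Fin q, IGLe G' f' ∧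
      (fixedPoints f').ncard = (fixedPoints f).ncard := by
  set σ : (V' → Fin q) → V → Fin q := fun y => y ∘ e
  have hσ : Bijective σ := (e.toEquiv.arrowCongr (Equiv.refl (Fin q))).symm.bijective
  refine ⟨fun y v' => f (σ y) (e.symm v'), fun u' v' hdep => ?_, ?_⟩
  · refine (e.symm.map_adj_iff).mp (hf _ _ (hdep.of_comp fun a b hab x hx => hab (e x) ?_))
    exact fun hxu => hx (by simp [← hxu])
  · have : fixedPoints (fun y v' => f (σ y) (e.symm v')) = σ ⁻¹' fixedPoints f := by
      ext y
      simp only [mem_fixedPoints, IsFixedPt, Set.mem_preimage, funext_iff]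
      exact ⟨fun h v => by simpa [σ] using h (e v), fun h v' => by simpa [σ] using h (e.symm v')⟩
    rw [this, Set.ncard_preimage_of_injective_subset_range hσ.1 (by simp [hσ.2.range_eq])]

theorem guessing_congr (e : G ≃g G') (q : ℕ) : guessing G q = guessing G' q := by
  refine congrArg sSup (Set.ext fun x => ⟨?_, ?_⟩) <;> rintro ⟨f, hf, rfl⟩
  · obtain ⟨f', hf', hcard⟩ := exists_igle_ncard_fixedPoints_eq e hf
    exact ⟨f', hf', congrArg _ (congrArg _ hcard.symm)⟩
  · obtain ⟨f', hf', hcard⟩ := exists_igle_ncard_fixedPoints_eq e.symm hf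
    exact ⟨f', hf', congrArg _ (congrArg _ hcard.symm)⟩

theorem graphEntropy_congr (e : G ≃g G') : graphEntropy G = graphEntropy G' := by
  simp only [graphEntropy, guessing_congr e]

end Isomorphism

section Reduction

variable {V : Type*} [DecidableEq V] {G : SimpleGraph V} {W D : Finset V} {i : W → V} {q : ℕ}

/-- If every neighbour of `D` lies in `W`, a fixed point of `f` with values `c` on `W` takes these
values on `W ∪ D`, whatever the padding `p₀`. -/
def forcedValues (f : (V → Fin q) → V → Fin q) (p₀ : V → Fin q) (c : W → Fin q) : V → Fin q :=
  extend Subtype.val c (f (extend Subtype.val c p₀))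

def inducedMap (f : (V → Fin q) → V → Fin q) (p₀ : V → Fin q) (c : W → Fin q) :
    (↥(↑(W ∪ D) : Set V)ᶜ → Fin q) → ↥(↑(W ∪ D) : Set V)ᶜ → Fin q :=
  fun z v => f (extend Subtype.val z (forcedValues f p₀ c)) v

theorem igle_inducedMap {f : (V → Fin q) → V → Fin q} (hf : IGLe G f) (p₀ : V → Fin q)
    (c : W → Fin q) : IGLe (G.induce (↑(W ∪ D) : Set V)ᶜ) (inducedMap f p₀ c) := by
  refine fun u v hdep => hf u v (hdep.of_comp fun a b hab x hx => ?_)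
  by_cases hxC : x ∈ (↑(W ∪ D) : Set V)ᶜ
  · rw [extend_val_apply hxC, extend_val_apply hxC]
    exact hab _ fun h => hx (congrArg Subtype.val h)
  · rw [extend_val_apply' hxC, extend_val_apply' hxC]

theorem extend_forcedValues_of_mem_fixedPoints [Fintype V] {f : (V → Fin q) → V → Fin q}
    (hf : IGLe G f) (hD : ∀ d ∈ D, G.neighborSet d ⊆ W) (p₀ : V → Fin q) {p : V → Fin q}
    (hp : p ∈ fixedPoints f) :
    extend Subtype.val (fun v : ↥(↑(W ∪ D) : Set V)ᶜ => p v)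
      (forcedValues f p₀ fun w : W => p w) = p := by
  have hpW : ∀ v ∈ W, extend Subtype.val (fun w : W => p w) p₀ v = p v :=
    fun v hv => extend_val_apply (p := (· ∈ W)) hv
  funext v
  by_cases hvC : v ∈ (↑(W ∪ D) : Set V)ᶜ
  · exact extend_val_apply hvC
  rw [extend_val_apply' hvC, forcedValues]
  by_cases hvW : v ∈ W
  · exact extend_val_apply (p := (· ∈ W)) hvW
  have hvD : v ∈ D := by simpa [hvW] using hvC
  rw [extend_val_apply' (p := (· ∈ W)) hvW, ← congrFun hp v]
  exact hf.dependsOn_neighborSet v fun u hu => hpW u (hD v hvD hu)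

theorem guessing_le_card_add_guessing_induce [Fintype V] (hD : ∀ d ∈ D, G.neighborSet d ⊆ W)
    (hq : 2 ≤ q) : guessing G q ≤ W.card + guessing (G.induce (↑(W ∪ D) : Set V)ᶜ) q := by
  refine guessing_le G (by omega) fun f hf hne => ?_
  obtain ⟨p₀, -⟩ := id hne
  set g' := guessing (G.induce (↑(W ∪ D) : Set V)ᶜ) q
  set F := inducedMap (D := D) f p₀
  set glue : (W → Fin q) → (↥(↑(W ∪ D) : Set V)ᶜ → Fin q) → V → Fin q :=
    fun c z => extend Subtype.val z (forcedValues f p₀ c)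
  have hsub : fixedPoints f ⊆ ⋃ c, glue c '' fixedPoints (F c) := by
    intro p hp
    have hglue := extend_forcedValues_of_mem_fixedPoints hf hD p₀ hp
    refine Set.mem_iUnion.2 ⟨fun w => p w, fun v => p v, funext fun v => ?_, hglue⟩
    exact (congrArg (f · v) hglue).trans (congrFun hp v)
  have hcard : ((fixedPoints f).ncard : ℝ) ≤ (q : ℝ) ^ (W.card + g') := by
    calc ((fixedPoints f).ncard : ℝ)
        ≤ ∑ c : W → Fin q, ((glue c '' fixedPoints (F c)).ncard : ℝ) := by
          exact_mod_cast (Set.ncard_le_ncard hsub).trans (Set.ncard_iUnion_le_of_fintype _)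
      _ ≤ ∑ _c : W → Fin q, (q : ℝ) ^ g' := by
          refine Finset.sum_le_sum fun c _ => (Nat.cast_le.2 (Set.ncard_image_le)).trans ?_
          exact ncard_fixedPoints_le_rpow_guessing _ (by omega) (igle_inducedMap hf p₀ c)
      _ = (q : ℝ) ^ (W.card + g') := by
          rw [Finset.sum_const, Finset.card_univ, Fintype.card_fun, Fintype.card_coe,
            Fintype.card_fin, nsmul_eq_mul, Real.rpow_add (by positivity), Real.rpow_natCast]
          push_cast
          ring
  rwa [Real.logb_le_iff_le_rpow (by exact_mod_cast hq) (by exact_mod_cast hne.ncard_pos)]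

def matchedMap [NeZero q] (hi : Injective i)
    (f' : (↥(↑(W ∪ D) : Set V)ᶜ → Fin q) → ↥(↑(W ∪ D) : Set V)ᶜ → Fin q) :
    (V → Fin q) → V → Fin q :=
  fun x v => if h : v ∈ (↑(W ∪ D) : Set V)ᶜ then f' (Set.domRestrict _ x) ⟨v, h⟩
    else if h : v ∈ W then x (i ⟨v, h⟩)
    else if h : v ∈ Set.range i then x ((Equiv.ofInjective i hi).symm ⟨v, h⟩)
    else 0

def matchedPoint [NeZero q] (hi : Injective i) (z : ↥(↑(W ∪ D) : Set V)ᶜ → Fin q) (c : W → Fin q) :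
    V → Fin q :=
  fun v => if h : v ∈ (↑(W ∪ D) : Set V)ᶜ then z ⟨v, h⟩
    else if h : v ∈ W then c ⟨v, h⟩
    else if h : v ∈ Set.range i then c ((Equiv.ofInjective i hi).symm ⟨v, h⟩)
    else 0

theorem igle_matchedMap [NeZero q] (hi : Injective i) (hadj : ∀ w : W, G.Adj w (i w))
    {f' : (↥(↑(W ∪ D) : Set V)ᶜ → Fin q) → ↥(↑(W ∪ D) : Set V)ᶜ → Fin q}
    (hf' : IGLe (G.induce (↑(W ∪ D) : Set V)ᶜ) f') : IGLe G (matchedMap hi f') := by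
  intro u v hdep
  by_cases hvC : v ∈ (↑(W ∪ D) : Set V)ᶜ
  · simp only [matchedMap, dif_pos hvC] at hdep
    obtain ⟨huC, hdep⟩ := EssDependsOn.of_domRestrict (g := fun z => f' z ⟨v, hvC⟩) hdep
    exact hf' _ _ hdep
  by_cases hvW : v ∈ W
  · simp only [matchedMap, dif_neg hvC, dif_pos hvW] at hdep
    exact hdep.eq_of_eval ▸ (hadj ⟨v, hvW⟩).symm
  by_cases hvi : v ∈ Set.range i
  · simp only [matchedMap, dif_neg hvC, dif_neg hvW, dif_pos hvi] at hdep
    have := hadj ((Equiv.ofInjective i hi).symm ⟨v, hvi⟩)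
    rwa [Equiv.apply_ofInjective_symm hi, ← hdep.eq_of_eval] at this
  · simp only [matchedMap, dif_neg hvC, dif_neg hvW, dif_neg hvi] at hdep
    exact absurd hdep (not_essDependsOn_const 0 u)

theorem matchedPoint_mem_fixedPoints [NeZero q] (hi : Injective i) (hWD : Disjoint W D)
    (hiD : ∀ w, i w ∈ D)
    {f' : (↥(↑(W ∪ D) : Set V)ᶜ → Fin q) → ↥(↑(W ∪ D) : Set V)ᶜ → Fin q}
    {z : ↥(↑(W ∪ D) : Set V)ᶜ → Fin q} (hz : z ∈ fixedPoints f') (c : W → Fin q) :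
    matchedPoint hi z c ∈ fixedPoints (matchedMap hi f') := by
  have hiC : ∀ w : W, i w ∉ (↑(W ∪ D) : Set V)ᶜ := fun w => by simp [hiD w]
  have hiW : ∀ w : W, i w ∉ W := fun w => Finset.disjoint_right.1 hWD (hiD w)
  have hWC : ∀ w : W, (w : V) ∉ (↑(W ∪ D) : Set V)ᶜ := fun w => by simp
  funext v
  by_cases hvC : v ∈ (↑(W ∪ D) : Set V)ᶜ
  · have hrestrict : Set.domRestrict _ (matchedPoint hi z c) = z :=
      funext fun v => dif_pos v.2
    simp only [matchedMap, matchedPoint, dif_pos hvC, hrestrict]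
    exact congrFun hz _
  by_cases hvW : v ∈ W
  · simp only [matchedMap, matchedPoint, dif_neg hvC, dif_pos hvW, dif_neg (hiC _),
      dif_neg (hiW _), dif_pos (Set.mem_range_self _), Equiv.ofInjective_symm_apply]
  by_cases hvi : v ∈ Set.range i
  · simp only [matchedMap, matchedPoint, dif_neg hvC, dif_neg hvW, dif_pos hvi, dif_neg (hWC _),
      dif_pos (Subtype.prop _), Subtype.coe_eta]
  · simp only [matchedMap, matchedPoint, dif_neg hvC, dif_neg hvW, dif_neg hvi]

theorem matchedPoint_injective [NeZero q] (hi : Injective i) :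
    Injective (uncurry (matchedPoint (D := D) (q := q) hi)) := by
  rintro ⟨z₁, c₁⟩ ⟨z₂, c₂⟩ h
  have hWC : ∀ w : W, (w : V) ∉ (↑(W ∪ D) : Set V)ᶜ := fun w => by simp
  refine Prod.ext (funext fun v => ?_) (funext fun w => ?_)
  · simpa only [uncurry_apply_pair, matchedPoint, dif_pos v.2] using congrFun h v
  · simpa only [uncurry_apply_pair, matchedPoint, dif_neg (hWC w), dif_pos w.2] using congrFun h w

theorem card_add_guessing_induce_le_guessing [Fintype V] (hWD : Disjoint W D) (hi : Injective i)
    (hiD : ∀ w, i w ∈ D) (hadj : ∀ w : W, G.Adj w (i w)) (hq : 2 ≤ q) :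
    W.card + guessing (G.induce (↑(W ∪ D) : Set V)ᶜ) q ≤ guessing G q := by
  have : NeZero q := ⟨by omega⟩
  have hq₁ : (1 : ℝ) < q := by exact_mod_cast hq
  suffices guessing (G.induce (↑(W ∪ D) : Set V)ᶜ) q ≤ guessing G q - W.card by linarith
  refine guessing_le _ (by omega) fun f' hf' hne => ?_
  have hcard : (fixedPoints f').ncard * q ^ W.card ≤ (fixedPoints (matchedMap hi f')).ncard := by
    calc (fixedPoints f').ncard * q ^ W.card
        = (fixedPoints f' ×ˢ (Set.univ : Set (W → Fin q))).ncard := by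
          simp [Set.ncard_prod]
      _ ≤ _ := Set.ncard_le_ncard_of_injOn _
          (fun x hx => matchedPoint_mem_fixedPoints hi hWD hiD hx.1 x.2)
          (matchedPoint_injective hi).injOn
  have hpos : (0 : ℝ) < (fixedPoints f').ncard := by exact_mod_cast hne.ncard_pos
  rw [le_sub_iff_add_le]
  calc Real.logb q (fixedPoints f').ncard + W.card
      = Real.logb q ((fixedPoints f').ncard * (q : ℝ) ^ W.card) := by
        rw [Real.logb_mul hpos.ne' (by positivity), Real.logb_pow, Real.logb_self_eq_one hq₁,
          mul_one]
    _ ≤ Real.logb q (fixedPoints (matchedMap hi f')).ncard :=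
        Real.logb_le_logb_of_le hq₁ (by positivity) (by exact_mod_cast hcard)
    _ ≤ guessing G q := le_guessing G (by omega) (igle_matchedMap hi hadj hf')

theorem guessing_eq_card_add_guessing_induce [Fintype V] (hWD : Disjoint W D)
    (hD : ∀ d ∈ D, G.neighborSet d ⊆ W) (hi : Injective i) (hiD : ∀ w, i w ∈ D)
    (hadj : ∀ w : W, G.Adj w (i w)) (hq : 2 ≤ q) :
    guessing G q = W.card + guessing (G.induce (↑(W ∪ D) : Set V)ᶜ) q :=
  (guessing_le_card_add_guessing_induce hD hq).antisymm
    (card_add_guessing_induce_le_guessing hWD hi hiD hadj hq)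

theorem graphEntropy_eq_card_add_graphEntropy_induce [Fintype V] (hWD : Disjoint W D)
    (hD : ∀ d ∈ D, G.neighborSet d ⊆ W) (hi : Injective i) (hiD : ∀ w, i w ∈ D)
    (hadj : ∀ w : W, G.Adj w (i w)) :
    graphEntropy G = W.card + graphEntropy (G.induce (↑(W ∪ D) : Set V)ᶜ) :=
  graphEntropy_eq_add_of_forall_guessing_eq_add G fun _ hq =>
    guessing_eq_card_add_guessing_induce hWD hD hi hiD hadj hq

end Reduction

theorem EntropyMinimal.eq_empty_of_matching {n : ℕ} {G : SimpleGraph (Fin n)}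
    (hG : EntropyMinimal G) {W D : Finset (Fin n)} (hWD : Disjoint W D)
    (hD : ∀ d ∈ D, G.neighborSet d ⊆ W) {i : W → Fin n} (hi : Injective i)
    (hiD : ∀ w, i w ∈ D) (hadj : ∀ w : W, G.Adj w (i w)) : D = ∅ := by
  by_contra hne
  obtain ⟨d, hd⟩ := Finset.nonempty_iff_ne_empty.2 hne
  set C : Set (Fin n) := (↑(W ∪ D))ᶜ
  have hC : Fintype.card C < n := by
    simpa using Fintype.card_subtype_lt (p := (· ∈ C)) (x := d) (by simp [C, hd])
  refine hG _ hC ((G.induce C).overFin rfl) ?_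
  rw [← graphEntropy_congr (SimpleGraph.overFinIso _ rfl),
    graphEntropy_eq_card_add_graphEntropy_induce hWD hD hi hiD hadj, Int.fract_natCast_add]

theorem EntropyMinimal.card_lt_card_of_neighborSet_subset {n : ℕ} {G : SimpleGraph (Fin n)}
    (hG : EntropyMinimal G) {U Z : Finset (Fin n)} (hU : U.Nonempty) (hUZ : Disjoint U Z)
    (hN : ∀ u ∈ U, G.neighborSet u ⊆ Z) : U.card < Z.card := by
  classical
  obtain ⟨k, hk⟩ : ∃ k, Z.card = k := ⟨_, rfl⟩
  induction k using Nat.strong_induction_on generalizing U Z with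
  | _ k ih =>
    subst hk
    by_contra! hle
    set t : Z → Finset (Fin n) := fun z => U.filter (G.Adj z)
    by_cases hall : ∀ s : Finset Z, s.card ≤ (s.biUnion t).card
    · obtain ⟨i, hi, hit⟩ := (Finset.all_card_le_biUnion_card_iff_exists_injective t).1 hall
      exact hU.ne_empty <| hG.eq_empty_of_matching hUZ.symm hN hi
        (fun z => (Finset.mem_filter.1 (hit z)).1) (fun z => (Finset.mem_filter.1 (hit z)).2)
    push Not at hall
    obtain ⟨s, hs⟩ := hall
    -- `s` violates Hall's condition; dropping `s` from `Z` and its neighbours from `U`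
    -- keeps `|Z| ≤ |U|`.
    set S := s.map (Embedding.subtype _)
    set T := s.biUnion t
    have hSZ : S ⊆ Z := fun v hv => by
      obtain ⟨z, -, rfl⟩ := Finset.mem_map.1 hv
      exact z.2
    have hTU : T ⊆ U := Finset.biUnion_subset.2 fun z _ => Finset.filter_subset _ _
    have hS : S.card = s.card := Finset.card_map _
    have hSZ' := Finset.card_le_card hSZ
    have hZS := Finset.card_sdiff_of_subset hSZ
    have hUT := Finset.card_sdiff_of_subset hTU
    have hN' : ∀ u ∈ U \ T, G.neighborSet u ⊆ ↑(Z \ S) := by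
      intro u hu v huv
      obtain ⟨huU, huT⟩ := Finset.mem_sdiff.1 hu
      refine Finset.mem_sdiff.2 ⟨hN u huU huv, fun hvS => huT ?_⟩
      obtain ⟨z, hz, rfl⟩ := Finset.mem_map.1 hvS
      exact Finset.mem_biUnion.2 ⟨z, hz, Finset.mem_filter.2 ⟨huU, G.adj_symm huv⟩⟩
    have := ih _ (by omega) (U := U \ T) (Finset.card_pos.1 (by omega))
      (hUZ.mono Finset.sdiff_subset Finset.sdiff_subset) hN' rfl
    omega

theorem SimpleGraph.Subgraph.IsMatching.not_adj_of_notMem_verts_of_maximum {V : Type*}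
    [Finite V] {G : SimpleGraph V} {M : G.Subgraph} (hM : M.IsMatching)
    (hmax : ∀ M' : G.Subgraph, M'.IsMatching → M'.verts.ncard ≤ M.verts.ncard) {u v : V}
    (hu : u ∉ M.verts) (hv : v ∉ M.verts) : ¬G.Adj u v := by
  intro huv
  have hdisj : Disjoint M.verts {u, v} := by
    simp [Set.disjoint_insert_right, hu, hv]
  have hM' : (M ⊔ G.subgraphOfAdj huv).IsMatching := by
    refine hM.sup (.subgraphOfAdj huv) ?_
    rwa [hM.support_eq_verts, (IsMatching.subgraphOfAdj huv).support_eq_verts,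
      SimpleGraph.subgraphOfAdj_verts]
  have := hmax _ hM'
  rw [Subgraph.verts_sup, SimpleGraph.subgraphOfAdj_verts, Set.ncard_union_eq hdisj,
    Set.ncard_pair huv.ne] at this
  omega

theorem entropyMinimal_few_unmatched_vertices_general {n : ℕ} (h : ℕ) (hh : 0 < h)
    (G : SimpleGraph (Fin n)) (hmin : EntropyMinimal G)
    (h1 : (h : ℝ) - 1 < graphEntropy G)
    (M : G.Subgraph) (hM : M.IsMatching)
    (hmax : ∀ M' : G.Subgraph, M'.IsMatching → M'.verts.ncard ≤ M.verts.ncard) :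
    (M.vertsᶜ).ncard < M.verts.ncard ∧ n < 2 * M.verts.ncard := by
  classical
  have hn : 0 < n := by
    have hH := graphEntropy_le_card G
    have hh' : (1 : ℝ) ≤ h := by exact_mod_cast hh
    rw [Fintype.card_fin] at hH
    exact_mod_cast (show (0 : ℝ) < n by linarith)
  have hsum : M.verts.ncard + (M.vertsᶜ).ncard = n := by
    simpa using Set.ncard_add_ncard_compl M.verts
  have hlt : (M.vertsᶜ).ncard < M.verts.ncard := by
    rcases (M.vertsᶜ).eq_empty_or_nonempty with hU | hU
    · rw [hU, Set.ncard_empty] at hsum ⊢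
      omega
    rw [Set.ncard_eq_toFinset_card', Set.ncard_eq_toFinset_card']
    refine hmin.card_lt_card_of_neighborSet_subset (Set.toFinset_nonempty.2 hU)
      (Set.disjoint_toFinset.2 disjoint_compl_left) fun u hu v huv => ?_
    by_contra hv
    exact hM.not_adj_of_notMem_verts_of_maximum hmax (by simpa using hu) (by simpa using hv) huv
  exact ⟨hlt, by omega⟩

/-- If `G` is entropy-minimal with `h - 1 < H(G) < h` and `M` is the vertex set of a maximum
matching of `G`, then the number of vertices outside `M` is smaller than `|M|`; in particular
`G` has fewer than `2|M|` vertices. -/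
theorem entropyMinimal_few_unmatched_vertices {n : ℕ} (h : ℕ) (hh : 0 < h)
    (G : SimpleGraph (Fin n)) (hmin : EntropyMinimal G)
    (h1 : (h : ℝ) - 1 < graphEntropy G) (h2 : graphEntropy G < (h : ℝ))
    (M : G.Subgraph) (hM : M.IsMatching)
    (hmax : ∀ M' : G.Subgraph, M'.IsMatching → M'.verts.ncard ≤ M.verts.ncard) :
    (M.vertsᶜ).ncard < M.verts.ncard ∧ n < 2 * M.verts.ncard :=
  entropyMinimal_few_unmatched_vertices_general h hh G hmin h1 M hM hmax
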